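/- Fix real parameters γ, α with γ > 1 and α > 0, reals n_x, n_y, and let P = diag(α², (γ−1)/2, (γ−1)/2, 1). For Φ = (φ₁,φ₂,φ₃,φ₄) ∈ ℝ⁴ with φ₁ ≠ 0, set u = φ₂/φ₁, v = φ₃/φ₁, u_n = n_x u + n_y v, p = φ₄², and let Ã(Φ) = [[α²u, 0, 0, 0],[0, ((γ−1)/2)u, 0, 0],[0, 0, ((γ−1)/2)u, 0],[0, 2(γ−1)φ₄/φ₁, 0, (2−γ)u]] and B̃(Φ) = [[α²v, 0, 0, 0],[0, ((γ−1)/2)v, 0, 0],[0, 0, ((γ−1)/2)v, 0],[0, 0, 2(γ−1)φ₄/φ₁, (2−γ)v]]. Then Φᵀ ( n_x Ã(Φ) + n_y B̃(Φ) ) Φ = u_n · ( Φᵀ P Φ + (γ−1) p ). -/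
import Mathlib


open Matrix

/-- The diagonal norm matrix `P = diag(α², (γ−1)/2, (γ−1)/2, 1)`. -/
noncomputable def normP (γ α : ℝ) : Matrix (Fin 4) (Fin 4) ℝ :=
  Matrix.diagonal ![α ^ 2, (γ - 1) / 2, (γ - 1) / 2, 1]

/-- The derived matrix `Ã(Φ)` with free parameters set to zero. -/
noncomputable def matAtil0 (γ α : ℝ) (φ : Fin 4 → ℝ) : Matrix (Fin 4) (Fin 4) ℝ :=
  let u := φ 1 / φ 0
  let q := φ 3 / φ 0
  !![α ^ 2 * u, 0, 0, 0;
     0, (γ - 1) / 2 * u, 0, 0;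
     0, 0, (γ - 1) / 2 * u, 0;
     0, 2 * (γ - 1) * q, 0, (2 - γ) * u]

/-- The derived matrix `B̃(Φ)` with free parameters set to zero. -/
noncomputable def matBtil0 (γ α : ℝ) (φ : Fin 4 → ℝ) : Matrix (Fin 4) (Fin 4) ℝ :=
  let v := φ 2 / φ 0
  let q := φ 3 / φ 0
  !![α ^ 2 * v, 0, 0, 0;
     0, (γ - 1) / 2 * v, 0, 0;
     0, 0, (γ - 1) / 2 * v, 0;
     0, 0, 2 * (γ - 1) * q, (2 - γ) * v]

/-- **The boundary energy rate as energy transport plus pressure work:**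
`Φᵀ (n_x Ã + n_y B̃) Φ = u_n (Φᵀ P Φ + (γ−1) p)` with `p = φ₄²`. -/
theorem stmt_13 (γ α nx ny : ℝ) (hγ : 1 < γ) (hα : 0 < α)
    (Φ : Fin 4 → ℝ) (hφ1 : Φ 0 ≠ 0) :
    Φ ⬝ᵥ (nx • matAtil0 γ α Φ + ny • matBtil0 γ α Φ).mulVec Φ
      = (nx * (Φ 1 / Φ 0) + ny * (Φ 2 / Φ 0))
        * (Φ ⬝ᵥ (normP γ α).mulVec Φ + (γ - 1) * Φ 3 ^ 2) := by
  simp only [matAtil0, matBtil0, normP]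
  simp [dotProduct, mulVec, Matrix.diagonal, Fin.sum_univ_four, Matrix.cons_val_zero,
    Matrix.cons_val_one, Matrix.head_cons, Matrix.vecHead, Matrix.vecTail, Function.comp]
  field_simp
  ring
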